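/- arXiv:1310.6644 — 4 statements merged into one kernel-verified Lean document; each statement's English description precedes it below -/
import Mathlib

section
/- In any dimaze, every linkable set of vertices can be extended to a set that is linkable onto the exits; that is, if a set I is linkable to B_0, then there exists a set J with I ⊆ J and a linkage from J whose paths have terminal vertices covering all of B_0. -/
open Set

universe u

variable {V : Type*}

/-- A directed path in the digraph `D`: a nonempty duplicate-free list of vertices
with an edge between consecutive vertices. -/
structure DiPath {V : Type*} (D : V → V → Prop) where
  verts : List V
  ne : verts ≠ []
  nodup : verts.Nodup
  chain : verts.Chain' D

namespace DiPath

variable {D : V → V → Prop}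

/-- The initial vertex of a directed path. -/
def first (p : DiPath D) : V := p.verts.head p.ne

/-- The terminal vertex of a directed path. -/
def last (p : DiPath D) : V := p.verts.getLast p.ne

/-- The set of vertices of a directed path. -/
def vertSet (p : DiPath D) : Set V := {v | v ∈ p.verts}

/-- The set of (directed) edges of a directed path. -/
def edgeSet (p : DiPath D) : Set (V × V) := {e | e ∈ p.verts.zip p.verts.tail}

end DiPath

/-- The set of initial vertices of a collection of paths. -/
def Ini {D : V → V → Prop} (P : Set (DiPath D)) : Set V := {v | ∃ p ∈ P, p.first = v}

/-- The set of terminal vertices of a collection of paths. -/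
def Ter {D : V → V → Prop} (P : Set (DiPath D)) : Set V := {v | ∃ p ∈ P, p.last = v}

/-- All vertices used by a collection of paths. -/
def LinkVerts {D : V → V → Prop} (P : Set (DiPath D)) : Set V := ⋃ p ∈ P, p.vertSet

/-- All edges used by a collection of paths. -/
def LinkEdges {D : V → V → Prop} (P : Set (DiPath D)) : Set (V × V) := ⋃ p ∈ P, p.edgeSet

/-- A linkage in the dimaze `(D, B0)`: a set of pairwise vertex-disjoint directed
paths, each ending in `B0`. -/
def IsLinkage (D : V → V → Prop) (B0 : Set V) (P : Set (DiPath D)) : Prop :=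
  (∀ p ∈ P, p.last ∈ B0) ∧
  (∀ p ∈ P, ∀ q ∈ P, p ≠ q → Disjoint p.vertSet q.vertSet)

/-- `(D, B0)` is a dimaze: every vertex of `B0` has out-degree `0`. -/
def IsDimaze (D : V → V → Prop) (B0 : Set V) : Prop := ∀ b ∈ B0, ∀ v, ¬ D b v

/-- A set of vertices is linkable if it is the set of initial vertices of a linkage. -/
def Linkable (D : V → V → Prop) (B0 : Set V) (I : Set V) : Prop :=
  ∃ P, IsLinkage D B0 P ∧ Ini P = I

/-- A set of vertices is linkable onto `B0` if it is the set of initial vertices of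
a linkage whose terminal vertices are all of `B0`. -/
def LinkableOnto (D : V → V → Prop) (B0 : Set V) (I : Set V) : Prop :=
  ∃ P, IsLinkage D B0 P ∧ Ini P = I ∧ Ter P = B0

/-- `I` is a maximal element (w.r.t. inclusion) of the set system `Ind`. -/
def MaximalIn {α : Type*} (Ind : Set α → Prop) (I : Set α) : Prop :=
  Ind I ∧ ∀ J, Ind J → I ⊆ J → J = I

/-- The maximality axiom (IM). -/
def SatisfiesIM {α : Type*} (Ind : Set α → Prop) : Prop :=
  ∀ I X : Set α, Ind I → I ⊆ X →
    ∃ J, Ind J ∧ I ⊆ J ∧ J ⊆ X ∧ ∀ K, Ind K → K ⊆ X → J ⊆ K → K = J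

/-- `Ind` is the collection of independent sets of a matroid:
axioms (I1), (I2), (I3) and (IM). -/
def IsMatroidIndep {α : Type*} (Ind : Set α → Prop) : Prop :=
  Ind ∅ ∧
  (∀ I J : Set α, I ⊆ J → Ind J → Ind I) ∧
  (∀ I B : Set α, Ind I → ¬ MaximalIn Ind I → MaximalIn Ind B →
    ∃ x ∈ B \ I, Ind (insert x I)) ∧
  SatisfiesIM Ind

/-- The dimaze `(D, B0)` contains an alternating comb: there is an alternating ray
(given by the injective vertex sequence `f` and edge orientations `o`, with
infinitely many vertices of in-degree 2) together with a linkage of all its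
in-degree-2 vertices and its first vertex onto a set of exits contained in `B0`,
by disjoint paths meeting the ray exactly at their initial vertices. -/
def ContainsAltComb (D : V → V → Prop) (B0 : Set V) : Prop :=
  ∃ (f : ℕ → V) (o : ℕ → Bool) (P : Set (DiPath D)),
    Function.Injective f ∧
    (∀ n, if o n then D (f n) (f (n+1)) else D (f (n+1)) (f n)) ∧
    (∀ N, ∃ k ≥ N, o k = true ∧ o (k+1) = false) ∧
    IsLinkage D B0 P ∧
    Ini P = insert (f 0) {v | ∃ k, o k = true ∧ o (k+1) = false ∧ v = f (k+1)} ∧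
    (∀ p ∈ P, ∀ v ∈ p.vertSet, v ∈ Set.range f → v = p.first)

/-! A linkage `P` is extended by the trivial one-vertex paths at the exits that are not terminal
vertices of `P`. These are disjoint from the paths of `P`: an exit has out-degree `0`, so it can
lie on a path only as its last vertex. -/

theorem List.IsChain.eq_getLast_of_forall_not_rel {α : Type*} {R : α → α → Prop} {l : List α}
    (h : l.IsChain R) (hl : l ≠ []) {v : α} (hv : v ∈ l) (hout : ∀ w, ¬ R v w) :
    v = l.getLast hl := by
  have key := h.backwards_induction (fun x => (∃ w, R x w) ∨ x = l.getLast hl) l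
    (fun x _ hxy _ => Or.inl ⟨_, hxy⟩) (fun _ => Or.inr rfl) v hv
  exact key.resolve_left fun ⟨w, hw⟩ => hout w hw

namespace DiPath

variable {D : V → V → Prop} {B0 : Set V}

theorem eq_last_of_mem_of_isDimaze (hD : IsDimaze D B0) (p : DiPath D) {b : V}
    (hb : b ∈ B0) (hbp : b ∈ p.vertSet) : b = p.last :=
  p.chain.eq_getLast_of_forall_not_rel p.ne hbp (hD b hb)

def single (D : V → V → Prop) (b : V) : DiPath D :=
  ⟨[b], List.cons_ne_nil b [], List.nodup_singleton b, List.isChain_singleton b⟩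

@[simp]
theorem single_first (b : V) : (single D b).first = b := rfl

@[simp]
theorem single_last (b : V) : (single D b).last = b := rfl

@[simp]
theorem single_vertSet (b : V) : (single D b).vertSet = {b} := by
  ext; simp [single, vertSet]

end DiPath

section Linkage

variable {D : V → V → Prop} {B0 : Set V}

theorem Ini_union (P Q : Set (DiPath D)) : Ini (P ∪ Q) = Ini P ∪ Ini Q := by
  ext; simp only [Ini, mem_ofPred_eq, mem_union, or_and_right, exists_or]

theorem Ter_union (P Q : Set (DiPath D)) : Ter (P ∪ Q) = Ter P ∪ Ter Q := by
  ext; simp only [Ter, mem_ofPred_eq, mem_union, or_and_right, exists_or]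

@[simp]
theorem Ini_image_single (S : Set V) : Ini (DiPath.single D '' S) = S := by
  ext; simp [Ini]

@[simp]
theorem Ter_image_single (S : Set V) : Ter (DiPath.single D '' S) = S := by
  ext; simp [Ter]

theorem IsLinkage.ter_subset {P : Set (DiPath D)} (hP : IsLinkage D B0 P) : Ter P ⊆ B0 := by
  rintro _ ⟨p, hp, rfl⟩
  exact hP.1 p hp

theorem IsLinkage.union {P Q : Set (DiPath D)} (hP : IsLinkage D B0 P) (hQ : IsLinkage D B0 Q)
    (hPQ : ∀ p ∈ P, ∀ q ∈ Q, Disjoint p.vertSet q.vertSet) : IsLinkage D B0 (P ∪ Q) := by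
  refine ⟨fun p hp => hp.elim (hP.1 p) (hQ.1 p), ?_⟩
  rintro p (hp | hp) q (hq | hq) hne
  · exact hP.2 p hp q hq hne
  · exact hPQ p hp q hq
  · exact (hPQ q hq p hp).symm
  · exact hQ.2 p hp q hq hne

theorem isLinkage_image_single {S : Set V} (hS : S ⊆ B0) :
    IsLinkage D B0 (DiPath.single D '' S) := by
  refine ⟨?_, ?_⟩
  · rintro _ ⟨b, hb, rfl⟩
    exact hS hb
  · rintro _ ⟨b, -, rfl⟩ _ ⟨c, -, rfl⟩ hne
    rw [DiPath.single_vertSet, DiPath.single_vertSet, disjoint_singleton]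
    exact fun h => hne (h ▸ rfl)

theorem notMem_vertSet_of_notMem_Ter (hD : IsDimaze D B0) {P : Set (DiPath D)}
    {b : V} (hb : b ∈ B0) (hbP : b ∉ Ter P) {p : DiPath D} (hp : p ∈ P) : b ∉ p.vertSet :=
  fun hbp => hbP ⟨p, hp, (p.eq_last_of_mem_of_isDimaze hD hb hbp).symm⟩

theorem IsLinkage.union_single_unusedExits (hD : IsDimaze D B0) {P : Set (DiPath D)}
    (hP : IsLinkage D B0 P) : IsLinkage D B0 (P ∪ DiPath.single D '' (B0 \ Ter P)) := by
  refine hP.union (isLinkage_image_single sdiff_subset) ?_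
  rintro p hp _ ⟨b, ⟨hb, hbP⟩, rfl⟩
  rw [DiPath.single_vertSet, disjoint_singleton_right]
  exact notMem_vertSet_of_notMem_Ter hD hb hbP hp

end Linkage

/-- In any dimaze, every linkable set extends to a set linkable onto the exits. -/
theorem linkable_extends_to_linkableOnto (D : V → V → Prop) (B0 : Set V)
    (hD : IsDimaze D B0) (I : Set V) (hI : Linkable D B0 I) :
    ∃ J : Set V, I ⊆ J ∧ LinkableOnto D B0 J := by
  obtain ⟨P, hP, rfl⟩ := hI
  refine ⟨Ini P ∪ (B0 \ Ter P), subset_union_left,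
    P ∪ DiPath.single D '' (B0 \ Ter P), hP.union_single_unusedExits hD, ?_, ?_⟩
  · rw [Ini_union, Ini_image_single]
  · rw [Ter_union, Ter_image_single, union_sdiff_self, union_eq_right.2 hP.ter_subset]
end

section
/- Linkage theorem (Pym): Let D be a digraph, P a linkage from a vertex set X_P onto a vertex set Y_P, and Q a linkage from X_Q onto Y_Q. Then there exist sets X∞ and Y∞ with X_P ⊆ X∞ ⊆ X_P ∪ X_Q and Y_Q ⊆ Y∞ ⊆ Y_Q ∪ Y_P, and a linkage from X∞ onto Y∞. -/
open Set

universe u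

variable {V : Type*}

/-!
Cut every `Q`-path at its last vertex in a vertex set `U`, keeping the final segment, and every
`P`-path at its first vertex on one of these final segments, keeping the initial segment. The
vertices of the kept initial segments depend monotonically on `U`, so by Knaster–Tarski this map
has a fixed point `U`. For that `U` a kept initial segment and a kept final segment can meet only
in a vertex that ends the one and starts the other. Glue the matching pairs together and keep the
unmatched segments: this is a linkage. Each `P`-path gives a path with the same first vertex,
each `Q`-path gives one with the same last vertex, and the remaining ends come from `P` or `Q`.
-/

namespace List

variable {α : Type*}

open Classical in
noncomputable def takeUntil (W : Set α) : List α → List α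
  | [] => []
  | a :: l => if a ∈ W then [a] else a :: takeUntil W l

theorem takeUntil_prefix (W : Set α) (l : List α) : takeUntil W l <+: l := by
  induction l with
  | nil => exact prefix_refl []
  | cons a l ih =>
    unfold takeUntil
    split_ifs
    · exact ⟨l, rfl⟩
    · exact (prefix_cons_inj a).2 ih

variable {W W' : Set α}

theorem takeUntil_ne_nil {l : List α} (hl : l ≠ []) : takeUntil W l ≠ [] := by
  obtain ⟨a, l, rfl⟩ := exists_cons_of_ne_nil hl
  unfold takeUntil
  split_ifs <;> simp

theorem eq_getLast_of_mem_takeUntil {l : List α} {v : α} (hv : v ∈ takeUntil W l)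
    (hvW : v ∈ W) : v = (takeUntil W l).getLast (ne_nil_of_mem hv) := by
  induction l with
  | nil => simp [takeUntil] at hv
  | cons a l ih =>
    unfold takeUntil at hv ⊢
    split_ifs at hv ⊢ with ha
    · simpa using hv
    · obtain rfl | hv := mem_cons.1 hv
      · exact absurd hvW ha
      · rw [getLast_cons (ne_nil_of_mem hv)]
        exact ih hv

theorem getLast_takeUntil_eq_or_mem {l : List α} (hl : l ≠ []) :
    (takeUntil W l).getLast (takeUntil_ne_nil hl) = l.getLast hl ∨
      (takeUntil W l).getLast (takeUntil_ne_nil hl) ∈ W := by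
  induction l with
  | nil => exact absurd rfl hl
  | cons a l ih =>
    simp only [takeUntil]
    split_ifs with ha
    · exact Or.inr ha
    · rcases l with _ | ⟨b, l⟩
      · simp [takeUntil]
      · rw [getLast_cons (takeUntil_ne_nil (cons_ne_nil b l)), getLast_cons (cons_ne_nil b l)]
        exact ih (cons_ne_nil b l)

theorem takeUntil_prefix_takeUntil (hW : W ⊆ W') (l : List α) :
    takeUntil W' l <+: takeUntil W l := by
  induction l with
  | nil => exact prefix_refl []
  | cons a l ih =>
    unfold takeUntil
    by_cases ha' : a ∈ W'
    · rw [if_pos ha']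
      split_ifs <;> simp
    · rw [if_neg ha', if_neg fun ha => ha' (hW ha)]
      exact (prefix_cons_inj a).2 ih

end List

namespace DiPath

variable {D : V → V → Prop} (p : DiPath D) {W W' : Set V}

theorem first_mem : p.first ∈ p.vertSet := List.head_mem p.ne

theorem last_mem : p.last ∈ p.vertSet := List.getLast_mem p.ne

def reverse : DiPath (fun a b => D b a) where
  verts := p.verts.reverse
  ne := by simpa using p.ne
  nodup := List.nodup_reverse.2 p.nodup
  chain := List.isChain_reverse.2 p.chain

theorem vertSet_reverse : p.reverse.vertSet = p.vertSet := by
  ext v; simp [vertSet, reverse]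

theorem first_reverse : p.reverse.first = p.last := List.head_reverse _

theorem last_reverse : p.reverse.last = p.first := List.getLast_reverse _

noncomputable def takeUntil (W : Set V) : DiPath D where
  verts := p.verts.takeUntil W
  ne := List.takeUntil_ne_nil p.ne
  nodup := p.nodup.sublist (List.takeUntil_prefix W _).sublist
  chain := p.chain.prefix (List.takeUntil_prefix W _)

theorem vertSet_takeUntil_subset : (p.takeUntil W).vertSet ⊆ p.vertSet :=
  (List.takeUntil_prefix W _).subset

theorem first_takeUntil : (p.takeUntil W).first = p.first :=
  (List.takeUntil_prefix W _).head _

theorem eq_last_of_mem_takeUntil {v : V} (hv : v ∈ (p.takeUntil W).vertSet) (hvW : v ∈ W) :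
    v = (p.takeUntil W).last :=
  List.eq_getLast_of_mem_takeUntil hv hvW

theorem last_takeUntil_eq_or_mem :
    (p.takeUntil W).last = p.last ∨ (p.takeUntil W).last ∈ W :=
  List.getLast_takeUntil_eq_or_mem p.ne

theorem vertSet_takeUntil_anti (hW : W ⊆ W') :
    (p.takeUntil W').vertSet ⊆ (p.takeUntil W).vertSet :=
  (List.takeUntil_prefix_takeUntil hW _).subset

/-- The final segment of `p` starting at its last vertex in `U` (all of `p` if there is none). -/
noncomputable def dropUntilLast (U : Set V) : DiPath D := (p.reverse.takeUntil U).reverse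

theorem vertSet_dropUntilLast_subset : (p.dropUntilLast W).vertSet ⊆ p.vertSet := by
  simpa only [dropUntilLast, vertSet_reverse] using p.reverse.vertSet_takeUntil_subset

theorem last_dropUntilLast : (p.dropUntilLast W).last = p.last := by
  simpa only [dropUntilLast, last_reverse, first_reverse] using p.reverse.first_takeUntil

theorem eq_first_of_mem_dropUntilLast {v : V} (hv : v ∈ (p.dropUntilLast W).vertSet)
    (hvW : v ∈ W) : v = (p.dropUntilLast W).first := by
  simp only [dropUntilLast, vertSet_reverse, first_reverse] at hv ⊢
  exact p.reverse.eq_last_of_mem_takeUntil hv hvW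

theorem first_dropUntilLast_eq_or_mem :
    (p.dropUntilLast W).first = p.first ∨ (p.dropUntilLast W).first ∈ W := by
  simpa only [dropUntilLast, first_reverse, last_reverse] using
    p.reverse.last_takeUntil_eq_or_mem

theorem vertSet_dropUntilLast_anti (hW : W ⊆ W') :
    (p.dropUntilLast W').vertSet ⊆ (p.dropUntilLast W).vertSet := by
  simpa only [dropUntilLast, vertSet_reverse] using p.reverse.vertSet_takeUntil_anti hW

theorem cons_last_tail_eq {r s : DiPath D} (h : r.last = s.first) :
    r.last :: s.verts.tail = s.verts := by
  rw [h]; exact List.cons_head_tail s.ne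

def append (r s : DiPath D) (h : r.last = s.first)
    (hrs : ∀ v ∈ r.vertSet, v ∈ s.vertSet → v = s.first) : DiPath D where
  verts := r.verts ++ s.verts.tail
  ne := by simp [r.ne]
  nodup := by
    refine r.nodup.append (s.nodup.sublist (List.tail_sublist _)) fun v hvr hvs => ?_
    have hs := s.nodup
    rw [← List.cons_head_tail s.ne, List.nodup_cons] at hs
    rw [hrs v hvr (List.mem_of_mem_tail hvs)] at hvs
    exact hs.1 hvs
  chain := by
    rw [← List.dropLast_append_getLast r.ne]
    refine List.IsChain.append_overlap ?_ ?_ (List.cons_ne_nil _ _)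
    · rw [List.dropLast_append_getLast r.ne]; exact r.chain
    · rw [List.singleton_append]; exact cons_last_tail_eq h ▸ s.chain

variable {r s : DiPath D} {h : r.last = s.first}
  {hrs : ∀ v ∈ r.vertSet, v ∈ s.vertSet → v = s.first}

theorem first_append : (r.append s h hrs).first = r.first :=
  List.head_append_of_ne_nil r.ne

theorem last_append : (r.append s h hrs).last = s.last := by
  have hv : (r.append s h hrs).verts = r.verts.dropLast ++ s.verts := by
    simp only [append]
    conv_lhs => rw [← List.dropLast_append_getLast r.ne]
    rw [List.append_assoc, List.singleton_append]
    exact congrArg _ (cons_last_tail_eq h)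
  exact (List.getLast_congr _ (by simp [s.ne]) hv).trans
    (List.getLast_append_of_ne_nil _ s.ne)

theorem vertSet_append : (r.append s h hrs).vertSet = r.vertSet ∪ s.vertSet := by
  ext v
  simp only [vertSet, append, mem_ofPred_eq, List.mem_append, mem_union]
  refine ⟨Or.imp_right List.mem_of_mem_tail, ?_⟩
  rintro (hv | hv)
  · exact Or.inl hv
  · rw [← cons_last_tail_eq h, List.mem_cons] at hv
    exact hv.imp (fun e : v = r.last => e ▸ r.last_mem) id

end DiPath

/-- Heads of the `P`-paths and tails of the `Q`-paths that glue to a linkage. -/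
structure Splice {D : V → V → Prop} (P Q : Set (DiPath D)) where
  head : DiPath D → DiPath D
  tail : DiPath D → DiPath D
  vertSet_head_subset : ∀ p ∈ P, (head p).vertSet ⊆ p.vertSet
  first_head : ∀ p ∈ P, (head p).first = p.first
  vertSet_tail_subset : ∀ q ∈ Q, (tail q).vertSet ⊆ q.vertSet
  last_tail : ∀ q ∈ Q, (tail q).last = q.last
  eq_of_mem_head_of_mem_tail : ∀ p ∈ P, ∀ q ∈ Q, ∀ v ∈ (head p).vertSet,
    v ∈ (tail q).vertSet → v = (head p).last ∧ v = (tail q).first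
  last_head : ∀ p ∈ P,
    (head p).last = p.last ∨ (head p).last ∈ ⋃ q ∈ Q, (tail q).vertSet
  first_tail : ∀ q ∈ Q,
    (tail q).first = q.first ∨ (tail q).first ∈ ⋃ p ∈ P, (head p).vertSet

namespace Splice

variable {D : V → V → Prop} {P Q : Set (DiPath D)} {p q : DiPath D}

section

variable (s : Splice P Q)

def Joins (p q : DiPath D) : Prop := p ∈ P ∧ q ∈ Q ∧ (s.head p).last = (s.tail q).first

def reach (p : DiPath D) : Set V :=
  (s.head p).vertSet ∪ ⋃ q ∈ {q | s.Joins p q}, (s.tail q).vertSet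

end

variable {s : Splice P Q}

theorem Joins.right_unique (hQ : Q.PairwiseDisjoint DiPath.vertSet) {q' : DiPath D}
    (h : s.Joins p q) (h' : s.Joins p q') : q = q' :=
  hQ.elim_set h.2.1 h'.2.1 _ (s.vertSet_tail_subset q h.2.1 (s.tail q).first_mem)
    (s.vertSet_tail_subset q' h'.2.1 (h.2.2.symm.trans h'.2.2 ▸ (s.tail q').first_mem))

theorem Joins.left_unique (hP : P.PairwiseDisjoint DiPath.vertSet) {p' : DiPath D}
    (h : s.Joins p q) (h' : s.Joins p' q) : p = p' :=
  hP.elim_set h.1 h'.1 _ (s.vertSet_head_subset p h.1 (s.head p).last_mem)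
    (s.vertSet_head_subset p' h'.1 (h.2.2.trans h'.2.2.symm ▸ (s.head p').last_mem))

variable (s)

theorem joins_of_mem (hp : p ∈ P) (hq : q ∈ Q) {v : V} (hvp : v ∈ (s.head p).vertSet)
    (hvq : v ∈ (s.tail q).vertSet) : s.Joins p q :=
  ⟨hp, hq, let h := s.eq_of_mem_head_of_mem_tail p hp q hq v hvp hvq; h.1.symm.trans h.2⟩

theorem exists_joins_of_last_head_ne (hp : p ∈ P) (hne : (s.head p).last ≠ p.last) :
    ∃ q, s.Joins p q := by
  obtain ⟨q, hq, hv⟩ := mem_iUnion₂.1 ((s.last_head p hp).resolve_left hne)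
  exact ⟨q, s.joins_of_mem hp hq (s.head p).last_mem hv⟩

theorem exists_joins_of_first_tail_ne (hq : q ∈ Q) (hne : (s.tail q).first ≠ q.first) :
    ∃ p, s.Joins p q := by
  obtain ⟨p, hp, hv⟩ := mem_iUnion₂.1 ((s.first_tail q hq).resolve_left hne)
  exact ⟨p, s.joins_of_mem hp hq hv (s.tail q).first_mem⟩

theorem joins_of_mem_reach (hQ : Q.PairwiseDisjoint DiPath.vertSet) (hp : p ∈ P) (hq : q ∈ Q)
    {v : V} (hvp : v ∈ s.reach p) (hvq : v ∈ (s.tail q).vertSet) : s.Joins p q := by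
  obtain hvp | hvp := hvp
  · exact s.joins_of_mem hp hq hvp hvq
  · obtain ⟨q', hpq', hvq'⟩ := mem_iUnion₂.1 hvp
    obtain rfl : q' = q := hQ.elim_set hpq'.2.1 hq v
      (s.vertSet_tail_subset q' hpq'.2.1 hvq') (s.vertSet_tail_subset q hq hvq)
    exact hpq'

theorem eq_of_mem_reach (hP : P.PairwiseDisjoint DiPath.vertSet)
    (hQ : Q.PairwiseDisjoint DiPath.vertSet) {p' : DiPath D} (hp : p ∈ P) (hp' : p' ∈ P)
    {v : V} (hv : v ∈ s.reach p) (hv' : v ∈ s.reach p') : p = p' := by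
  obtain hv | hv := hv
  · obtain hv' | hv' := hv'
    · exact hP.elim_set hp hp' v (s.vertSet_head_subset p hp hv)
        (s.vertSet_head_subset p' hp' hv')
    · obtain ⟨q, hpq, hvq⟩ := mem_iUnion₂.1 hv'
      exact (s.joins_of_mem hp hpq.2.1 hv hvq).left_unique hP hpq
  · obtain ⟨q, hpq, hvq⟩ := mem_iUnion₂.1 hv
    exact hpq.left_unique hP (s.joins_of_mem_reach hQ hp' hpq.2.1 hv' hvq)

theorem exists_glue (hQ : Q.PairwiseDisjoint DiPath.vertSet) (hp : p ∈ P) :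
    ∃ r : DiPath D, r.first = p.first ∧ r.vertSet ⊆ s.reach p ∧
      (∀ q, s.Joins p q → r.last = q.last) ∧
      ((∀ q, ¬ s.Joins p q) → r.last = p.last) := by
  by_cases hj : ∃ q, s.Joins p q
  · obtain ⟨q, hpq⟩ := hj
    refine ⟨(s.head p).append (s.tail q) hpq.2.2
        (fun v hvp hvq => (s.eq_of_mem_head_of_mem_tail p hp q hpq.2.1 v hvp hvq).2),
      DiPath.first_append.trans (s.first_head p hp), ?_, fun q' hpq' => ?_, fun h => ?_⟩
    · rw [DiPath.vertSet_append]
      exact union_subset_union_right _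
        (subset_biUnion_of_mem (u := fun q => (s.tail q).vertSet) hpq)
    · rw [DiPath.last_append, ← hpq.right_unique hQ hpq', s.last_tail q hpq.2.1]
    · exact absurd hpq (h q)
  · simp only [not_exists] at hj
    refine ⟨s.head p, s.first_head p hp, subset_union_left, fun q hpq => absurd hpq (hj q),
      fun _ => ?_⟩
    by_contra hne
    obtain ⟨q, hpq⟩ := s.exists_joins_of_last_head_ne hp hne
    exact hj q hpq

theorem pairwiseDisjoint_glue (hP : P.PairwiseDisjoint DiPath.vertSet)
    (hQ : Q.PairwiseDisjoint DiPath.vertSet) {G : DiPath D → DiPath D}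
    (hG : ∀ p ∈ P, (G p).vertSet ⊆ s.reach p) :
    (G '' P ∪ s.tail '' {q ∈ Q | ∀ p, ¬ s.Joins p q}).PairwiseDisjoint DiPath.vertSet := by
  refine fun r hr r' hr' hne => disjoint_left.2 fun v hv hv' => hne ?_
  obtain ⟨p, hp, rfl⟩ | ⟨q, hq, rfl⟩ := hr <;>
    obtain ⟨p', hp', rfl⟩ | ⟨q', hq', rfl⟩ := hr'
  · rw [s.eq_of_mem_reach hP hQ hp hp' (hG p hp hv) (hG p' hp' hv')]
  · exact absurd (s.joins_of_mem_reach hQ hp hq'.1 (hG p hp hv) hv') (hq'.2 p)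
  · exact absurd (s.joins_of_mem_reach hQ hp' hq.1 (hG p' hp' hv') hv) (hq.2 p')
  · rw [hQ.elim_set hq.1 hq'.1 v (s.vertSet_tail_subset q hq.1 hv)
      (s.vertSet_tail_subset q' hq'.1 hv')]

end Splice

theorem Splice.exists_linkage {D : V → V → Prop} {P Q : Set (DiPath D)} (s : Splice P Q)
    {B0 : Set V} (hP : IsLinkage D B0 P) (hQ : IsLinkage D B0 Q) :
    ∃ S : Set (DiPath D), IsLinkage D B0 S ∧
      Ini P ⊆ Ini S ∧ Ini S ⊆ Ini P ∪ Ini Q ∧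
      Ter Q ⊆ Ter S ∧ Ter S ⊆ Ter Q ∪ Ter P := by
  choose! G hG_first hG_reach hG_last hG_last_of_free using
    fun p (hp : p ∈ P) => s.exists_glue hQ.2 hp
  set S := G '' P ∪ s.tail '' {q ∈ Q | ∀ p, ¬ s.Joins p q}
  have hTer : Ter S ⊆ Ter Q ∪ Ter P := by
    rintro _ ⟨_, ⟨p, hp, rfl⟩ | ⟨q, hq, rfl⟩, rfl⟩
    · by_cases hj : ∃ q, s.Joins p q
      · obtain ⟨q, hpq⟩ := hj
        exact Or.inl ⟨q, hpq.2.1, (hG_last p hp q hpq).symm⟩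
      · exact Or.inr ⟨p, hp, (hG_last_of_free p hp (not_exists.1 hj)).symm⟩
    · exact Or.inl ⟨q, hq.1, (s.last_tail q hq.1).symm⟩
  refine ⟨S, ⟨fun r hr => ?_, s.pairwiseDisjoint_glue hP.2 hQ.2 hG_reach⟩, ?_, ?_, ?_, hTer⟩
  · obtain ⟨r', hr', h⟩ | ⟨r', hr', h⟩ := hTer ⟨r, hr, rfl⟩
    exacts [h ▸ hQ.1 r' hr', h ▸ hP.1 r' hr']
  · rintro _ ⟨p, hp, rfl⟩
    exact ⟨G p, Or.inl (mem_image_of_mem G hp), hG_first p hp⟩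
  · rintro _ ⟨_, ⟨p, hp, rfl⟩ | ⟨q, hq, rfl⟩, rfl⟩
    · exact Or.inl ⟨p, hp, (hG_first p hp).symm⟩
    · refine Or.inr ⟨q, hq.1, by_contra fun hne => ?_⟩
      obtain ⟨p, hpq⟩ := s.exists_joins_of_first_tail_ne hq.1 (Ne.symm hne)
      exact hq.2 p hpq
  · rintro _ ⟨q, hq, rfl⟩
    by_cases hj : ∃ p, s.Joins p q
    · obtain ⟨p, hpq⟩ := hj
      exact ⟨G p, Or.inl (mem_image_of_mem G hpq.1), hG_last p hpq.1 q hpq⟩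
    · exact ⟨s.tail q, Or.inr ⟨q, ⟨hq, not_exists.1 hj⟩, rfl⟩, s.last_tail q hq⟩

section Pym

variable {D : V → V → Prop}

noncomputable def pymOperator (P Q : Set (DiPath D)) : Set V →o Set V where
  toFun U := ⋃ p ∈ P, (p.takeUntil (⋃ q ∈ Q, (q.dropUntilLast U).vertSet)).vertSet
  monotone' _ _ hU := biUnion_mono subset_rfl fun p _ => p.vertSet_takeUntil_anti <|
    biUnion_mono subset_rfl fun q _ => q.vertSet_dropUntilLast_anti hU

noncomputable def Splice.ofIsFixedPt {P Q : Set (DiPath D)} {U : Set V}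
    (hU : Function.IsFixedPt (pymOperator P Q) U) : Splice P Q where
  head p := p.takeUntil (⋃ q ∈ Q, (q.dropUntilLast U).vertSet)
  tail q := q.dropUntilLast U
  vertSet_head_subset p _ := p.vertSet_takeUntil_subset
  first_head p _ := p.first_takeUntil
  vertSet_tail_subset q _ := q.vertSet_dropUntilLast_subset
  last_tail q _ := q.last_dropUntilLast
  eq_of_mem_head_of_mem_tail p hp q hq _ hvp hvq :=
    ⟨p.eq_last_of_mem_takeUntil hvp (mem_biUnion hq hvq),
      q.eq_first_of_mem_dropUntilLast hvq (hU.eq.subset (mem_biUnion hp hvp))⟩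
  last_head p _ := p.last_takeUntil_eq_or_mem
  first_tail q _ := q.first_dropUntilLast_eq_or_mem.imp_right fun h => hU.eq.symm.subset h

end Pym

/-- Pym's linkage theorem. -/
theorem linkage_theorem (D : V → V → Prop) (P Q : Set (DiPath D))
    (hP : IsLinkage D Set.univ P) (hQ : IsLinkage D Set.univ Q) :
    ∃ S : Set (DiPath D), IsLinkage D Set.univ S ∧
      Ini P ⊆ Ini S ∧ Ini S ⊆ Ini P ∪ Ini Q ∧
      Ter Q ⊆ Ter S ∧ Ter S ⊆ Ter Q ∪ Ter P :=
  (Splice.ofIsFixedPt (pymOperator P Q).isFixedPt_lfp).exists_linkage hP hQ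
end

section
/- For any dimaze (D, B_0), the linkability system satisfies the exchange property (∗): for all linkable sets I and J with J \ I nonempty, and for every v ∈ I \ J, there exists u ∈ J \ I such that J + v − u is linkable. -/
open Set

universe u

variable {V : Type*}

/-!
Let `P` link `I` and `Q` link `J`. We reroute paths of `Q`: a rerouted path runs along a path
`p ∈ P` until it meets some `q ∈ Q` and then follows `q`. The routes stay disjoint and serve all
of `J + v` but at most one vertex `w`, and only paths starting in `I` are rerouted, so `w ∈ I`.
If the `P`-path of `w` avoids all routes, `J + v` is linkable. Otherwise the route through its
first vertex on a route is made to start with it, which displaces the initial vertex `u` of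
that route; we are done if `u ∈ J \ I`, and otherwise continue with `u` in place of `w`.

Every step moves a junction forward along a path of `Q`, and Zorn's lemma yields a rerouting at
which no step is possible. Limits of chains stay valid because a vertex can only ever be served
by the finitely many paths of `Q` meeting the `P`-path starting at it, and their routes
eventually stabilise along the chain.
-/

lemma List.exists_first_getElem_mem {α : Type*} {l : List α} {O : Set α} (h : ∃ x ∈ l, x ∈ O) :
    ∃ i, ∃ hi : i < l.length, l[i] ∈ O ∧ ∀ x ∈ l.take i, x ∉ O := by
  classical
  have hex : ∃ i, ∃ hi : i < l.length, l[i] ∈ O := by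
    obtain ⟨x, hx, hxO⟩ := h
    obtain ⟨i, hi, rfl⟩ := List.mem_iff_getElem.1 hx
    exact ⟨i, hi, hxO⟩
  obtain ⟨hi, hO⟩ := Nat.find_spec hex
  refine ⟨_, hi, hO, fun x hx hxO => ?_⟩
  obtain ⟨m, hm, rfl⟩ := List.mem_iff_getElem.1 hx
  rw [List.getElem_take] at hxO
  exact Nat.find_min hex (hm.trans_le (List.length_take_le _ _)) ⟨_, hxO⟩

namespace DiPath

variable {D : V → V → Prop} {p q r : DiPath D} {j k : ℕ}

@[simp]
lemma mem_vertSet {x : V} : x ∈ p.vertSet ↔ x ∈ p.verts := Iff.rfl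

lemma first_mem_vertSet (p : DiPath D) : p.first ∈ p.vertSet :=
  List.head_mem p.ne

lemma head?_verts (p : DiPath D) : p.verts.head? = some p.first :=
  List.head?_eq_some_head p.ne

lemma getLast?_verts (p : DiPath D) : p.verts.getLast? = some p.last :=
  List.getLast?_eq_some_getLast p.ne

lemma exists_verts_eq_take_append_drop (p q : DiPath D) (hj : j < p.verts.length)
    (hk : k < q.verts.length) (h : p.verts[j] = q.verts[k])
    (hdisj : ∀ x ∈ p.verts.take j, x ∉ q.verts.drop k) :
    ∃ r : DiPath D, r.verts = p.verts.take j ++ q.verts.drop k := by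
  have hne : p.verts.take j ++ q.verts.drop k ≠ [] := by
    simp only [ne_eq, List.append_eq_nil_iff, List.drop_eq_nil_iff, not_and, not_le]
    exact fun _ => hk
  have hnodup : (p.verts.take j ++ q.verts.drop k).Nodup :=
    List.nodup_append.2 ⟨(List.take_sublist _ _).nodup p.nodup,
      (List.drop_sublist _ _).nodup q.nodup, fun a ha b hb hab => hdisj a ha (hab ▸ hb)⟩
  have hchain : (p.verts.take j ++ q.verts.drop k).IsChain D := by
    refine List.isChain_append.2 ⟨List.IsChain.take p.chain j, List.IsChain.drop q.chain k, ?_⟩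
    intro x hx y hy
    rw [List.head?_drop, List.getElem?_eq_getElem hk, Option.mem_some_iff, ← h] at hy
    obtain _ | i := j
    · simp at hx
    · rw [List.getLast?_take, if_neg (by omega), Nat.add_sub_cancel,
        List.getElem?_eq_getElem (by omega)] at hx
      obtain rfl := Option.mem_some_iff.1 hx
      exact hy ▸ List.isChain_iff_getElem.1 p.chain i hj
  exact ⟨⟨_, hne, hnodup, hchain⟩, rfl⟩

lemma first_eq_of_verts_eq_take_append_drop (h : p.verts[j]? = q.verts[k]?)
    (hr : r.verts = p.verts.take j ++ q.verts.drop k) : r.first = p.first := by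
  have hhead := r.head?_verts
  rw [hr, List.head?_append, List.head?_take] at hhead
  split_ifs at hhead with hj
  · subst hj
    rw [Option.none_or, List.head?_drop, ← h, ← List.head?_eq_getElem?, p.head?_verts] at hhead
    exact (Option.some_injective _ hhead).symm
  · rw [p.head?_verts, Option.some_or] at hhead
    exact (Option.some_injective _ hhead).symm

lemma last_eq_of_verts_eq_take_append_drop (hk : k < q.verts.length)
    (hr : r.verts = p.verts.take j ++ q.verts.drop k) : r.last = q.last := by
  have hlast := r.getLast?_verts
  rw [hr, List.getLast?_append, List.getLast?_drop, if_neg (by omega), q.getLast?_verts,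
    Option.some_or] at hlast
  exact (Option.some_injective _ hlast).symm

end DiPath

section Linkage

variable {D : V → V → Prop} {B0 : Set V} {R : Set (DiPath D)} {p q : DiPath D} {x : V}

lemma mem_linkVerts_of_mem (hp : p ∈ R) (hx : x ∈ p.vertSet) : x ∈ LinkVerts R :=
  Set.mem_biUnion hp hx

lemma IsLinkage.eq_of_mem_of_mem (hR : IsLinkage D B0 R) (hp : p ∈ R) (hq : q ∈ R)
    (hxp : x ∈ p.vertSet) (hxq : x ∈ q.vertSet) : p = q := by
  by_contra hne
  exact Set.disjoint_left.1 (hR.2 p hp q hq hne) hxp hxq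

lemma IsLinkage.eq_of_first_eq (hR : IsLinkage D B0 R) (hp : p ∈ R) (hq : q ∈ R)
    (h : p.first = q.first) : p = q :=
  hR.eq_of_mem_of_mem hp hq p.first_mem_vertSet (h ▸ q.first_mem_vertSet)

lemma IsLinkage.finite_setOf_meets (hR : IsLinkage D B0 R) {X : Set V} (hX : X.Finite) :
    {q ∈ R | ∃ x ∈ X, x ∈ q.vertSet}.Finite := by
  refine (hX.biUnion (t := fun x => {q ∈ R | x ∈ q.vertSet}) fun x _ => ?_).subset ?_
  · exact Set.Subsingleton.finite fun q hq q' hq' => hR.eq_of_mem_of_mem hq.1 hq'.1 hq.2 hq'.2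
  · rintro q ⟨hq, x, hx, hxq⟩
    exact Set.mem_biUnion hx ⟨hq, hxq⟩

lemma IsLinkage.insert (hR : IsLinkage D B0 R) (hp : p.last ∈ B0)
    (hdisj : ∀ q ∈ R, Disjoint p.vertSet q.vertSet) : IsLinkage D B0 (insert p R) := by
  refine ⟨by rintro q (rfl | hq); exacts [hp, hR.1 q hq], ?_⟩
  rintro q (rfl | hq) q' (rfl | hq') hne
  · exact absurd rfl hne
  · exact hdisj q' hq'
  · exact (hdisj q hq).symm
  · exact hR.2 q hq q' hq' hne

lemma ini_insert (p : DiPath D) (R : Set (DiPath D)) :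
    Ini (insert p R) = insert p.first (Ini R) := by
  ext x
  simp [Ini, eq_comm]

lemma Linkable.subset {K K' : Set V} (hK : Linkable D B0 K) (h : K' ⊆ K) :
    Linkable D B0 K' := by
  obtain ⟨R, hR, rfl⟩ := hK
  refine ⟨{r ∈ R | r.first ∈ K'},
    ⟨fun p hp => hR.1 p hp.1, fun p hp q hq => hR.2 p hp.1 q hq.1⟩, ?_⟩
  ext x
  constructor
  · rintro ⟨r, ⟨-, hr⟩, rfl⟩
    exact hr
  · intro hx
    obtain ⟨r, hr, rfl⟩ := h hx
    exact ⟨r, ⟨hr, hx⟩, rfl⟩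

end Linkage

section Exchange

variable {D : V → V → Prop} {B0 : Set V} {P Q : Set (DiPath D)}

def IsDetour (P : Set (DiPath D)) (q r : DiPath D) (k : ℕ) : Prop :=
  ∃ p ∈ P, ∃ j, ∃ (hj : j < p.verts.length) (hk : k < q.verts.length),
    p.verts[j] = q.verts[k] ∧ r.verts = p.verts.take j ++ q.verts.drop k

namespace IsDetour

variable {q r : DiPath D} {k : ℕ}

lemma lt_length (h : IsDetour P q r k) : k < q.verts.length := by
  obtain ⟨p, -, j, hj, hk, -⟩ := h
  exact hk

lemma last_eq (h : IsDetour P q r k) : r.last = q.last := by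
  obtain ⟨p, -, j, hj, hk, -, hr⟩ := h
  exact DiPath.last_eq_of_verts_eq_take_append_drop hk hr

lemma drop_subset (h : IsDetour P q r k) : ∀ x ∈ q.verts.drop k, x ∈ r.vertSet := by
  obtain ⟨p, -, j, hj, hk, -, hr⟩ := h
  intro x hx
  rw [DiPath.mem_vertSet, hr]
  exact List.mem_append_right _ hx

lemma exists_mem_path (h : IsDetour P q r k) :
    ∃ p ∈ P, p.first = r.first ∧ q.verts[k]'h.lt_length ∈ p.vertSet ∧
      ∀ x ∈ r.vertSet, x ∈ p.vertSet ∨ x ∈ q.verts.drop (k + 1) := by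
  obtain ⟨p, hp, j, hj, hk, hpq, hr⟩ := h
  have hpq' : q.verts[k] ∈ p.verts := hpq ▸ List.getElem_mem hj
  refine ⟨p, hp, (DiPath.first_eq_of_verts_eq_take_append_drop
    (by rw [List.getElem?_eq_getElem hj, List.getElem?_eq_getElem hk, hpq]) hr).symm,
    hpq', fun x hx => ?_⟩
  rw [DiPath.mem_vertSet, hr, List.mem_append, List.drop_eq_getElem_cons hk,
    List.mem_cons] at hx
  rcases hx with hx | rfl | hx
  · exact Or.inl (List.take_subset _ _ hx)
  · exact Or.inl hpq'
  · exact Or.inr hx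

end IsDetour

/-- A rerouting replaces some paths `q` of a linkage by a detour `r` joining `q` at position
`k`, recorded as `some (r, k)`. -/
def Rerouting (D : V → V → Prop) := DiPath D → Option (DiPath D × ℕ)

namespace Rerouting

variable {t t' : Rerouting D} {q q₀ r r₀ pw : DiPath D} {k : ℕ} {v w : V}

def route (t : Rerouting D) (q : DiPath D) : DiPath D := ((t q).map Prod.fst).getD q

lemma route_of_eq_none (h : t q = none) : t.route q = q := by
  simp [route, h]

lemma route_of_eq_some (h : t q = some (r, k)) : t.route q = r := by
  simp [route, h]

lemma route_congr (h : t q = t' q) : t.route q = t'.route q := by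
  simp [route, h]

def junction : Option (DiPath D × ℕ) → WithBot ℕ
  | none => ⊥
  | some (_, k) => k

instance : PartialOrder (Rerouting D) where
  le t t' := ∀ q, t q = t' q ∨ junction (t q) < junction (t' q)
  le_refl _ _ := Or.inl rfl
  le_trans t₁ t₂ t₃ h₁₂ h₂₃ q := by
    rcases h₁₂ q with h | h <;> rcases h₂₃ q with h' | h'
    · exact Or.inl (h.trans h')
    · exact Or.inr (h ▸ h')
    · exact Or.inr (h' ▸ h)
    · exact Or.inr (h.trans h')
  le_antisymm t t' h h' := funext fun q => by
    rcases h q with h | h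
    · exact h
    rcases h' q with h' | h'
    · exact h'.symm
    · exact absurd (h.trans h') (lt_irrefl _)

lemma apply_eq_of_le_of_le {t₁ t₂ t₃ : Rerouting D} (h₁₂ : t₁ ≤ t₂) (h₂₃ : t₂ ≤ t₃)
    (h : t₁ q = t₃ q) : t₂ q = t₃ q := by
  rcases h₁₂ q with h' | h'
  · exact h' ▸ h
  rcases h₂₃ q with h'' | h''
  · exact h''
  · rw [h] at h'
    exact absurd (h'.trans h'') (lt_irrefl _)

section

open scoped Classical

noncomputable def reroute (t : Rerouting D) (q₀ r₀ : DiPath D) (k : ℕ) : Rerouting D :=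
  Function.update t q₀ (some (r₀, k))

lemma reroute_self : t.reroute q₀ r₀ k q₀ = some (r₀, k) :=
  Function.update_self ..

lemma reroute_of_ne (h : q ≠ q₀) : t.reroute q₀ r₀ k q = t q :=
  Function.update_of_ne h ..

end

lemma route_reroute_self : (t.reroute q₀ r₀ k).route q₀ = r₀ :=
  route_of_eq_some reroute_self

lemma route_reroute_of_ne (h : q ≠ q₀) : (t.reroute q₀ r₀ k).route q = t.route q :=
  route_congr (reroute_of_ne h)

lemma lt_reroute (hk : junction (t q₀) < k) : t < t.reroute q₀ r₀ k := by
  have hle : t ≤ t.reroute q₀ r₀ k := fun q => by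
    by_cases h : q = q₀
    · subst h
      exact Or.inr (by rwa [reroute_self])
    · exact Or.inl (reroute_of_ne h).symm
  refine hle.lt_of_ne fun h => ?_
  have := congrFun h q₀
  rw [reroute_self] at this
  rw [this] at hk
  exact lt_irrefl _ hk

structure Admissible (P Q : Set (DiPath D)) (t : Rerouting D) : Prop where
  isDetour : ∀ q r k, t q = some (r, k) → IsDetour P q r k
  disjoint : ∀ q ∈ Q, ∀ q' ∈ Q, q ≠ q' → Disjoint (t.route q).vertSet (t.route q').vertSet

namespace Admissible

lemma isLinkage (ht : Admissible P Q t) (hQ : IsLinkage D B0 Q) :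
    IsLinkage D B0 (t.route '' Q) := by
  refine ⟨?_, ?_⟩
  · rintro _ ⟨q, hq, rfl⟩
    rcases h : t q with _ | ⟨r, k⟩
    · rw [route_of_eq_none h]
      exact hQ.1 q hq
    · rw [route_of_eq_some h, (ht.isDetour q r k h).last_eq]
      exact hQ.1 q hq
  · rintro _ ⟨q, hq, rfl⟩ _ ⟨q', hq', rfl⟩ hne
    exact ht.disjoint q hq q' hq' fun h => hne (h ▸ rfl)

lemma eq_of_first_eq (ht : Admissible P Q t) (hq : q ∈ Q) (hq₀ : q₀ ∈ Q)
    (h : (t.route q).first = (t.route q₀).first) : q = q₀ := by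
  by_contra hne
  exact Set.disjoint_left.1 (ht.disjoint q hq q₀ hq₀ hne) (DiPath.first_mem_vertSet _)
    (h ▸ DiPath.first_mem_vertSet _)

lemma junction_lt_length (ht : Admissible P Q t) (q : DiPath D) :
    junction (t q) < q.verts.length := by
  rcases h : t q with _ | ⟨r, k⟩
  · exact WithBot.bot_lt_coe _
  · exact WithBot.coe_lt_coe.2 (ht.isDetour q r k h).lt_length

lemma drop_subset_route (ht : Admissible P Q t) (hk : junction (t q) < k) :
    ∀ x ∈ q.verts.drop k, x ∈ (t.route q).vertSet := by
  rcases h : t q with _ | ⟨r, k'⟩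
  · rw [route_of_eq_none h]
    exact fun x hx => List.mem_of_mem_drop hx
  · rw [h, junction] at hk
    intro x hx
    rw [route_of_eq_some h]
    exact (ht.isDetour q r k' h).drop_subset x
      ((List.drop_sublist_drop_left _ (WithBot.coe_lt_coe.1 hk).le).subset hx)

lemma reroute (ht : Admissible P Q t) (hq₀ : q₀ ∈ Q) (hr₀ : IsDetour P q₀ r₀ k)
    (hsub : ∀ x ∈ r₀.vertSet, x ∈ (t.route q₀).vertSet ∨ x ∉ LinkVerts (t.route '' Q)) :
    Admissible P Q (t.reroute q₀ r₀ k) := by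
  have hnew : ∀ q ∈ Q, q ≠ q₀ → Disjoint r₀.vertSet (t.route q).vertSet := by
    refine fun q hq hne => Set.disjoint_left.2 fun x hx hxq => ?_
    rcases hsub x hx with h | h
    · exact Set.disjoint_left.1 (ht.disjoint q₀ hq₀ q hq (Ne.symm hne)) h hxq
    · exact h (mem_linkVerts_of_mem (Set.mem_image_of_mem _ hq) hxq)
  constructor
  · intro q r k' h
    by_cases hq : q = q₀
    · subst hq
      rw [reroute_self, Option.some_inj, Prod.mk.injEq] at h
      obtain ⟨rfl, rfl⟩ := h
      exact hr₀
    · exact ht.isDetour q r k' (by rwa [reroute_of_ne hq] at h)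
  · intro q hq q' hq' hne
    by_cases h : q = q₀
    · subst h
      rw [route_reroute_self, route_reroute_of_ne (Ne.symm hne)]
      exact hnew q' hq' (Ne.symm hne)
    by_cases h' : q' = q₀
    · subst h'
      rw [route_reroute_self, route_reroute_of_ne hne]
      exact (hnew q hq hne).symm
    rw [route_reroute_of_ne h, route_reroute_of_ne h']
    exact ht.disjoint q hq q' hq' hne

lemma ini_reroute (ht : Admissible P Q t) (hq₀ : q₀ ∈ Q) :
    Ini ((t.reroute q₀ r₀ k).route '' Q) =
      insert r₀.first (Ini (t.route '' Q) \ {(t.route q₀).first}) := by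
  ext x
  simp only [Ini, Set.mem_image, Set.mem_insert_iff, Set.mem_sdiff, Set.mem_singleton_iff,
    Set.mem_ofPred_eq, exists_exists_and_eq_and]
  constructor
  · rintro ⟨q, hq, rfl⟩
    by_cases h : q = q₀
    · subst h
      exact Or.inl (by rw [route_reroute_self])
    · rw [route_reroute_of_ne h]
      exact Or.inr ⟨⟨q, hq, rfl⟩, fun he => h (ht.eq_of_first_eq hq hq₀ he)⟩
  · rintro (rfl | ⟨⟨q, hq, rfl⟩, hne⟩)
    · exact ⟨q₀, hq₀, by rw [route_reroute_self]⟩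
    · have h : q ≠ q₀ := by
        rintro rfl
        exact hne rfl
      exact ⟨q, hq, by rw [route_reroute_of_ne h]⟩

/-- In front of its junction a route runs along the path of `P` starting at the vertex it
serves, so an unserved path of `P` can meet it only behind the junction. -/
lemma exists_junction_lt (hP : IsLinkage D B0 P) (ht : Admissible P Q t) (hpw : pw ∈ P)
    (hw : pw.first ∉ Ini (t.route '' Q)) (hq₀ : q₀ ∈ Q) {y : V} (hy : y ∈ pw.vertSet)
    (hyq : y ∈ (t.route q₀).vertSet) :
    ∃ k, ∃ hk : k < q₀.verts.length, q₀.verts[k] = y ∧ junction (t q₀) < k := by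
  rcases h : t q₀ with _ | ⟨r, k'⟩
  · rw [route_of_eq_none h] at hyq
    obtain ⟨k, hk, rfl⟩ := List.mem_iff_getElem.1 hyq
    exact ⟨k, hk, rfl, WithBot.bot_lt_coe _⟩
  rw [route_of_eq_some h] at hyq
  obtain ⟨p, hp, hpr, -, hsplit⟩ := (ht.isDetour q₀ r k' h).exists_mem_path
  rcases hsplit y hyq with hyp | hyd
  · obtain rfl := hP.eq_of_mem_of_mem hp hpw hyp hy
    exact absurd ⟨r, ⟨q₀, hq₀, route_of_eq_some h⟩, hpr.symm⟩ hw
  · obtain ⟨m, hm, rfl⟩ := List.mem_iff_getElem.1 hyd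
    rw [List.getElem_drop]
    exact ⟨k' + 1 + m, _, rfl, WithBot.coe_lt_coe.2 (by omega : k' < k' + 1 + m)⟩

/-- The new route follows `pw` up to its first vertex on a route, and then that route. -/
lemma exists_reroute (hP : IsLinkage D B0 P) (ht : Admissible P Q t) (hpw : pw ∈ P)
    (hw : pw.first ∉ Ini (t.route '' Q))
    (hmeet : ¬ Disjoint pw.vertSet (LinkVerts (t.route '' Q))) :
    ∃ q₀ ∈ Q, ∃ (r₀ : DiPath D) (k : ℕ), r₀.first = pw.first ∧ junction (t q₀) < k ∧
      Admissible P Q (t.reroute q₀ r₀ k) := by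
  obtain ⟨i, hi, hO, hpre⟩ := List.exists_first_getElem_mem (l := pw.verts)
    (O := LinkVerts (t.route '' Q)) (by simpa [Set.not_disjoint_iff] using hmeet)
  obtain ⟨q₀, hq₀, hyq⟩ : ∃ q₀ ∈ Q, pw.verts[i] ∈ (t.route q₀).vertSet := by
    simpa [LinkVerts] using hO
  obtain ⟨k, hk, hyk, hlt⟩ := ht.exists_junction_lt hP hpw hw hq₀ (List.getElem_mem hi) hyq
  have htail := ht.drop_subset_route hlt
  obtain ⟨r₀, hr₀⟩ := pw.exists_verts_eq_take_append_drop q₀ hi hk hyk.symm fun x hx hx' =>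
    hpre x hx (mem_linkVerts_of_mem (Set.mem_image_of_mem _ hq₀) (htail x hx'))
  refine ⟨q₀, hq₀, r₀, k, DiPath.first_eq_of_verts_eq_take_append_drop
    (by rw [List.getElem?_eq_getElem hi, List.getElem?_eq_getElem hk, hyk]) hr₀, hlt,
    ht.reroute hq₀ ⟨pw, hpw, i, hi, hk, hyk.symm, hr₀⟩ fun x hx => ?_⟩
  rw [DiPath.mem_vertSet, hr₀, List.mem_append] at hx
  exact hx.elim (fun hx => Or.inr (hpre x hx)) fun hx => Or.inl (htail x hx)

end Admissible

structure Valid (P Q : Set (DiPath D)) (v : V) (t : Rerouting D) : Prop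
    extends Admissible P Q t where
  first_mem : ∀ q r k, t q = some (r, k) → r.first ∈ insert v (Ini Q) ∧ q.first ∈ Ini P
  subsingleton : (insert v (Ini Q) \ Ini (t.route '' Q)).Subsingleton

namespace Valid

lemma const_none (hQ : IsLinkage D B0 Q) (v : V) : Valid P Q v fun _ => none where
  isDetour _ _ _ h := by simp at h
  disjoint q hq q' hq' hne := by simpa [route] using hQ.2 q hq q' hq' hne
  first_mem _ _ _ h := by simp at h
  subsingleton := by
    refine Set.subsingleton_of_subset_singleton (a := v) fun x ⟨hx, hxQ⟩ => ?_
    refine (Set.mem_insert_iff.1 hx).resolve_right fun hx => hxQ ?_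
    simpa [Ini, route] using hx

lemma ini_subset (ht : Valid P Q v t) : Ini (t.route '' Q) ⊆ insert v (Ini Q) := by
  rintro _ ⟨_, ⟨q, hq, rfl⟩, rfl⟩
  rcases h : t q with _ | ⟨r, k⟩
  · exact Or.inr ⟨q, hq, by rw [route_of_eq_none h]⟩
  · rw [route_of_eq_some h]
    exact (ht.first_mem q r k h).1

lemma insert_eq (ht : Valid P Q v t) (hw : w ∈ insert v (Ini Q))
    (hw' : w ∉ Ini (t.route '' Q)) : insert v (Ini Q) = insert w (Ini (t.route '' Q)) := by
  refine (Set.insert_subset hw ht.ini_subset).antisymm' fun x hx => ?_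
  by_cases hxt : x ∈ Ini (t.route '' Q)
  · exact Or.inr hxt
  · exact Or.inl (ht.subsingleton ⟨hx, hxt⟩ ⟨hw, hw'⟩)

lemma mem_ini_of_not_mem (ht : Valid P Q v t) (hv : v ∈ Ini P) (hw : w ∈ insert v (Ini Q))
    (hw' : w ∉ Ini (t.route '' Q)) : w ∈ Ini P := by
  obtain rfl | ⟨q, hq, rfl⟩ := hw
  · exact hv
  rcases h : t q with _ | ⟨r, k⟩
  · exact absurd ⟨q, ⟨q, hq, route_of_eq_none h⟩, rfl⟩ hw'
  · exact (ht.first_mem q r k h).2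

lemma reroute (ht : Valid P Q v t) (ht' : Admissible P Q (t.reroute q₀ r₀ k)) (hq₀ : q₀ ∈ Q)
    (hw : w ∈ insert v (Ini Q)) (hw' : w ∉ Ini (t.route '' Q)) (hr₀ : r₀.first = w)
    (hq₀I : q₀.first ∈ Ini P) : Valid P Q v (t.reroute q₀ r₀ k) where
  toAdmissible := ht'
  first_mem q r k' h := by
    by_cases hq : q = q₀
    · subst hq
      rw [reroute_self, Option.some_inj, Prod.mk.injEq] at h
      obtain ⟨rfl, rfl⟩ := h
      exact ⟨hr₀ ▸ hw, hq₀I⟩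
    · exact ht.first_mem q r k' (by rwa [reroute_of_ne hq] at h)
  subsingleton := by
    refine Set.subsingleton_of_subset_singleton (a := (t.route q₀).first) fun x ⟨hx, hxt⟩ => ?_
    rw [ht.toAdmissible.ini_reroute hq₀, hr₀] at hxt
    rw [ht.insert_eq hw hw'] at hx
    by_contra hne
    exact hxt (hx.imp_right fun hx => ⟨hx, hne⟩)

theorem linkable_of_maximal (hP : IsLinkage D B0 P) (hQ : IsLinkage D B0 Q)
    (hv : v ∈ Ini P) (ht : Maximal (Valid P Q v) t) :
    Linkable D B0 (insert v (Ini Q)) ∨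
      ∃ u ∈ Ini Q \ Ini P, Linkable D B0 (insert v (Ini Q) \ {u}) := by
  have hvalid := ht.1
  by_cases hall : insert v (Ini Q) ⊆ Ini (t.route '' Q)
  · exact Or.inl ⟨_, hvalid.isLinkage hQ, hvalid.ini_subset.antisymm hall⟩
  obtain ⟨w, hw, hw'⟩ := Set.not_subset.1 hall
  rw [hvalid.insert_eq hw hw']
  obtain ⟨pw, hpw, rfl⟩ := hvalid.mem_ini_of_not_mem hv hw hw'
  by_cases hmeet : Disjoint pw.vertSet (LinkVerts (t.route '' Q))
  · refine Or.inl ⟨_, (hvalid.isLinkage hQ).insert (hP.1 pw hpw) ?_, ini_insert _ _⟩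
    rintro _ hq
    exact hmeet.mono_right fun x hx => mem_linkVerts_of_mem hq hx
  obtain ⟨q₀, hq₀, r₀, k, hr₀, hlt, ht'⟩ := hvalid.exists_reroute hP hpw hw' hmeet
  have hq₀I : q₀.first ∉ Ini P := fun hq₀I =>
    (lt_reroute hlt).not_ge (ht.2 (hvalid.reroute ht' hq₀ hw hw' hr₀ hq₀I) (lt_reroute hlt).le)
  have hnone : t q₀ = none := by
    rcases h : t q₀ with _ | ⟨r, k'⟩
    · rfl
    · exact absurd (hvalid.first_mem q₀ r k' h).2 hq₀I
  have hne : pw.first ≠ q₀.first := fun he =>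
    hw' ⟨q₀, ⟨q₀, hq₀, route_of_eq_none hnone⟩, he.symm⟩
  refine Or.inr ⟨q₀.first, ⟨⟨q₀, hq₀, rfl⟩, hq₀I⟩, _, ht'.isLinkage hQ, ?_⟩
  rw [hvalid.toAdmissible.ini_reroute hq₀, hr₀, route_of_eq_none hnone,
    Set.insert_sdiff_singleton_comm hne]

end Valid

lemma finite_setOf_route_first_eq (hP : IsLinkage D B0 P) (hQ : IsLinkage D B0 Q)
    {T : Set (Rerouting D)} (hT : ∀ t ∈ T, Admissible P Q t) (u : V) :
    {q ∈ Q | ∃ t ∈ T, (t.route q).first = u}.Finite := by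
  have hX : (insert u (⋃ p ∈ {p ∈ P | p.first = u}, p.vertSet)).Finite := by
    refine Set.Finite.insert _ (Set.Finite.biUnion ?_ fun p _ => List.finite_toSet p.verts)
    exact Set.Subsingleton.finite fun p hp p' hp' =>
      hP.eq_of_first_eq hp.1 hp'.1 (hp.2.trans hp'.2.symm)
  refine (hQ.finite_setOf_meets hX).subset ?_
  rintro q ⟨hq, t, ht, rfl⟩
  refine ⟨hq, ?_⟩
  rcases h : t q with _ | ⟨r, k⟩
  · rw [route_of_eq_none h]
    exact ⟨q.first, Set.mem_insert _ _, q.first_mem_vertSet⟩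
  · obtain ⟨p, hp, hpr, hkp, -⟩ := ((hT t ht).isDetour q r k h).exists_mem_path
    rw [route_of_eq_some h]
    exact ⟨_, Or.inr (Set.mem_biUnion ⟨hp, hpr⟩ hkp), List.getElem_mem _⟩

variable {c : Set (Rerouting D)} {s : Rerouting D}

lemma exists_forall_le_apply (hc : IsChain (· ≤ ·) c) (hcA : ∀ t ∈ c, Admissible P Q t)
    (hne : c.Nonempty) (q : DiPath D) :
    ∃ t₀ ∈ c, ∀ t ∈ c, t q = t₀ q ∨ junction (t q) < junction (t₀ q) := by
  have hfin : ((fun t : Rerouting D => junction (t q)) '' c).Finite :=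
    (Set.finite_Iio (q.verts.length : WithBot ℕ)).subset <| by
      rintro _ ⟨t, ht, rfl⟩
      exact (hcA t ht).junction_lt_length q
  obtain ⟨t₀, ht₀, hmax⟩ := Set.Finite.exists_maximalFor' _ c hfin hne
  refine ⟨t₀, ht₀, fun t ht => ?_⟩
  rcases hc.total ht ht₀ with h | h
  · exact h q
  rcases h q with h | h
  · exact Or.inl h.symm
  · exact absurd (hmax ht h.le) h.not_ge

def IsPointwiseMax (c : Set (Rerouting D)) (s : Rerouting D) : Prop :=
  (∀ t ∈ c, t ≤ s) ∧ ∀ q, ∃ t ∈ c, t q = s q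

namespace IsPointwiseMax

lemma exists_forall_apply_eq (hs : IsPointwiseMax c s) (hc : IsChain (· ≤ ·) c)
    (hne : c.Nonempty) {W : Set (DiPath D)} (hW : W.Finite) :
    ∃ t₀ ∈ c, ∀ t ∈ c, t₀ ≤ t → ∀ q ∈ W, t q = s q := by
  choose f hfc hfs using hs.2
  obtain ⟨t₁, ht₁⟩ := hne
  have hF : insert t₁ (f '' W) ⊆ c :=
    Set.insert_subset ht₁ (Set.image_subset_iff.2 fun q _ => hfc q)
  obtain ⟨t₀, ht₀⟩ := ((hW.image f).insert t₁).exists_maximal (Set.insert_nonempty _ _)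
  refine ⟨t₀, hF ht₀.1, fun t ht hle q hq => ?_⟩
  have hfq : f q ≤ t₀ := (hc.total (hfc q) (hF ht₀.1)).elim id
    (ht₀.2 (Set.mem_insert_of_mem _ (Set.mem_image_of_mem f hq)))
  exact apply_eq_of_le_of_le (hfq.trans hle) (hs.1 t ht) (hfs q)

lemma eventually_not_mem_ini (hs : IsPointwiseMax c s) (hc : IsChain (· ≤ ·) c)
    (hne : c.Nonempty) (hP : IsLinkage D B0 P) (hQ : IsLinkage D B0 Q)
    (hcA : ∀ t ∈ c, Admissible P Q t) {u : V} (hu : u ∉ Ini (s.route '' Q)) :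
    ∃ t₀ ∈ c, ∀ t ∈ c, t₀ ≤ t → u ∉ Ini (t.route '' Q) := by
  obtain ⟨t₀, ht₀, hstable⟩ :=
    hs.exists_forall_apply_eq hc hne (finite_setOf_route_first_eq hP hQ hcA u)
  refine ⟨t₀, ht₀, ?_⟩
  rintro t ht hle ⟨_, ⟨q, hq, rfl⟩, hqu⟩
  exact hu ⟨_, ⟨q, hq, rfl⟩, route_congr (hstable t ht hle q ⟨hq, t, ht, hqu⟩) ▸ hqu⟩

lemma valid (hs : IsPointwiseMax c s) (hc : IsChain (· ≤ ·) c) (hne : c.Nonempty)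
    (hP : IsLinkage D B0 P) (hQ : IsLinkage D B0 Q) (hcV : ∀ t ∈ c, Valid P Q v t) :
    Valid P Q v s where
  isDetour q r k h := by
    obtain ⟨t, ht, hts⟩ := hs.2 q
    exact (hcV t ht).isDetour q r k (hts.trans h)
  disjoint q hq q' hq' hqq' := by
    obtain ⟨t, ht, hstable⟩ := hs.exists_forall_apply_eq hc hne (Set.toFinite {q, q'})
    rw [← route_congr (hstable t ht le_rfl q (by simp)),
      ← route_congr (hstable t ht le_rfl q' (by simp))]
    exact (hcV t ht).disjoint q hq q' hq' hqq'
  first_mem q r k h := by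
    obtain ⟨t, ht, hts⟩ := hs.2 q
    exact (hcV t ht).first_mem q r k (hts.trans h)
  subsingleton u hu u' hu' := by
    have hcA t ht := (hcV t ht).toAdmissible
    obtain ⟨t₁, ht₁, h₁⟩ := hs.eventually_not_mem_ini hc hne hP hQ hcA hu.2
    obtain ⟨t₂, ht₂, h₂⟩ := hs.eventually_not_mem_ini hc hne hP hQ hcA hu'.2
    rcases hc.total ht₁ ht₂ with h | h
    · exact (hcV t₂ ht₂).subsingleton ⟨hu.1, h₁ t₂ ht₂ h⟩ ⟨hu'.1, h₂ t₂ ht₂ le_rfl⟩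
    · exact (hcV t₁ ht₁).subsingleton ⟨hu.1, h₁ t₁ ht₁ le_rfl⟩ ⟨hu'.1, h₂ t₁ ht₁ h⟩

end IsPointwiseMax

lemma exists_maximal_valid (hP : IsLinkage D B0 P) (hQ : IsLinkage D B0 Q) (v : V) :
    ∃ t, Maximal (Valid P Q v) t := by
  have hchain : ∀ c ⊆ {t | Valid P Q v t}, IsChain (· ≤ ·) c → ∀ t₁ ∈ c,
      ∃ s ∈ {t | Valid P Q v t}, ∀ t ∈ c, t ≤ s := by
    intro c hcV hc t₁ ht₁
    choose f hfc hfmax using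
      exists_forall_le_apply hc (fun t ht => (hcV ht).toAdmissible) ⟨t₁, ht₁⟩
    have hs : IsPointwiseMax c fun q => f q q :=
      ⟨fun t ht q => hfmax q t ht, fun q => ⟨f q, hfc q, rfl⟩⟩
    exact ⟨_, hs.valid hc ⟨t₁, ht₁⟩ hP hQ fun t ht => hcV ht, hs.1⟩
  obtain ⟨t, -, ht⟩ := zorn_le_nonempty₀ _ hchain _ (Valid.const_none hQ v)
  exact ⟨t, ht⟩

end Rerouting

end Exchange

theorem linkability_exchange_general (D : V → V → Prop) (B0 : Set V)
    (I J : Set V) (hI : Linkable D B0 I) (hJ : Linkable D B0 J)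
    (hJI : (J \ I).Nonempty) (v : V) (hv : v ∈ I \ J) :
    ∃ u ∈ J \ I, Linkable D B0 (insert v (J \ {u})) := by
  obtain ⟨P, hP, rfl⟩ := hI
  obtain ⟨Q, hQ, rfl⟩ := hJ
  obtain ⟨t, ht⟩ := Rerouting.exists_maximal_valid hP hQ v
  rcases Rerouting.Valid.linkable_of_maximal hP hQ hv.1 ht with hall | ⟨u, hu, hlink⟩
  · obtain ⟨u, hu⟩ := hJI
    exact ⟨u, hu, hall.subset (Set.insert_subset_insert Set.sdiff_subset)⟩
  · have hvu : v ≠ u := fun h => hv.2 (h ▸ hu.1)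
    exact ⟨u, hu, hlink.subset (Set.insert_sdiff_singleton_comm hvu _).le⟩

/-- The linkability system of any dimaze satisfies the exchange property (∗). -/
theorem linkability_exchange (D : V → V → Prop) (B0 : Set V) (hD : IsDimaze D B0)
    (I J : Set V) (hI : Linkable D B0 I) (hJ : Linkable D B0 J)
    (hJI : (J \ I).Nonempty) (v : V) (hv : v ∈ I \ J) :
    ∃ u ∈ J \ I, Linkable D B0 (insert v (J \ {u})) :=
  linkability_exchange_general D B0 I J hI hJ hJI v hv
end

section
/- For any bipartite graph G with vertex bipartition (V, W), the collection of subsets of V that are matchable into W satisfies the augmentation axiom (I3): if I is a non-maximal matchable set and B is a maximal matchable set, then there exists y ∈ B \ I such that I + y is matchable into W. -/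
open Set

universe u

variable {V : Type*}

/-- `I` is matchable into the other side of the bipartite graph given by the
relation `E`. -/
def Matchable {α β : Type*} (E : α → β → Prop) (I : Set α) : Prop :=
  ∃ m : α → β, Set.InjOn m I ∧ ∀ v ∈ I, E v (m v)

/-- For any bipartite graph, the matchable subsets of one side satisfy the
augmentation axiom (I3). -/
theorem matchable_I3 {α β : Type*} (E : α → β → Prop) (I B : Set α)
    (hI : Matchable E I) (hInm : ¬ MaximalIn (Matchable E) I)
    (hB : MaximalIn (Matchable E) B) :
    ∃ y ∈ B \ I, Matchable E (insert y I) := by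
  classical
  have hex : ∃ x, x ∉ I ∧ Matchable E (insert x I) := by
    rw [MaximalIn, not_and_or] at hInm
    rcases hInm with h | h
    · exact absurd hI h
    push_neg at h
    obtain ⟨J, hJ, hIJ, hJI⟩ := h
    obtain ⟨x, hxJ, hxI⟩ : ∃ x ∈ J, x ∉ I := by
      by_contra hc; push_neg at hc
      exact hJI (Set.Subset.antisymm hc hIJ)
    obtain ⟨m, hm, hme⟩ := hJ
    exact ⟨x, hxI, m, hm.mono (insert_subset hxJ hIJ),
      fun v hv => hme v (insert_subset hxJ hIJ hv)⟩
  obtain ⟨x, hxI, M, hMinj, hMe⟩ := hex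
  by_cases hxB : x ∈ B
  · exact ⟨x, ⟨hxB, hxI⟩, M, hMinj, hMe⟩
  obtain ⟨N, hNinj, hNe⟩ := hB.1
  by_contra hcon
  push_neg at hcon
  -- hcon : ∀ y ∈ B \ I, ¬ Matchable E (insert y I)
  set Step : α → α → Prop := fun a c => c ∈ B ∧ c ∈ I ∧ N c = M a with hStepdef
  set S : Set α := {a | Relation.ReflTransGen Step x a} with hSdef
  have hxS : x ∈ S := Relation.ReflTransGen.refl
  have hSsub : ∀ a ∈ S, a ∈ insert x I := by
    intro a ha
    rcases Relation.ReflTransGen.cases_tail ha with rfl | ⟨c, _, hc⟩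
    · exact mem_insert _ _
    · exact mem_insert_of_mem _ hc.2.1
  set T : Set α := {v | v ∈ B ∧ ∃ a ∈ S, N v = M a} with hTdef
  have hST : ∀ v ∈ S, v ∈ I → v ∈ T := by
    intro v hv hvI
    rcases Relation.ReflTransGen.cases_tail hv with rfl | ⟨c, hcS, hc⟩
    · exact absurd hvI hxI
    · exact ⟨hc.1, c, hcS, hc.2.2⟩
  -- key fact: any B-vertex whose N-image is the M-image of a reachable vertex is in I
  have hdag : ∀ a ∈ S, ∀ c ∈ B, N c = M a → c ∈ I := by
    intro a ha c hcB hNc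
    by_contra hcI
    refine hcon c ⟨hcB, hcI⟩ ?_
    have hcT : c ∈ T := ⟨hcB, a, ha, hNc⟩
    refine ⟨fun v => if v ∈ T then N v else M v, ?_, ?_⟩
    · intro u hu v hv huv
      by_cases huT : u ∈ T <;> by_cases hvT : v ∈ T <;>
        simp only [huT, hvT, if_true, if_false] at huv
      · exact hNinj huT.1 hvT.1 huv
      · -- N u = M v, u ∈ T, v ∉ T
        exfalso
        obtain ⟨huB, a', ha'S, hNu⟩ := huT
        have hvI2 : v ∈ I := hv.resolve_left (by rintro rfl; exact hvT hcT)
        have hav : a' = v :=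
          hMinj (hSsub a' ha'S) (mem_insert_of_mem _ hvI2) (hNu.symm.trans huv)
        exact hvT (hST v (hav ▸ ha'S) hvI2)
      · -- M u = N v, u ∉ T, v ∈ T
        exfalso
        obtain ⟨hvB, a', ha'S, hNv⟩ := hvT
        have huI2 : u ∈ I := hu.resolve_left (by rintro rfl; exact huT hcT)
        have hau : a' = u :=
          hMinj (hSsub a' ha'S) (mem_insert_of_mem _ huI2) (hNv.symm.trans huv.symm)
        exact huT (hST u (hau ▸ ha'S) huI2)
      · have huI2 : u ∈ I := hu.resolve_left (by rintro rfl; exact huT hcT)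
        have hvI2 : v ∈ I := hv.resolve_left (by rintro rfl; exact hvT hcT)
        exact hMinj (mem_insert_of_mem _ huI2) (mem_insert_of_mem _ hvI2) huv
    · intro v hv
      by_cases hvT : v ∈ T
      · simp only [hvT, if_true]
        exact hNe v hvT.1
      · simp only [hvT, if_false]
        have hvI2 : v ∈ I := hv.resolve_left (by rintro rfl; exact hvT hcT)
        exact hMe v (mem_insert_of_mem _ hvI2)
  -- now B ∪ {x} is matchable, contradicting maximality of B
  have hBx : Matchable E (insert x B) := by
    refine ⟨fun v => if v ∈ S then M v else N v, ?_, ?_⟩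
    · intro u hu v hv huv
      by_cases huS : u ∈ S <;> by_cases hvS : v ∈ S <;>
        simp only [huS, hvS, if_true, if_false] at huv
      · exact hMinj (hSsub u huS) (hSsub v hvS) huv
      · -- M u = N v, u ∈ S, v ∉ S
        exfalso
        have hvB : v ∈ B := hv.resolve_left (by rintro rfl; exact hvS hxS)
        have hvI2 : v ∈ I := hdag u huS v hvB huv.symm
        exact hvS (Relation.ReflTransGen.tail huS ⟨hvB, hvI2, huv.symm⟩)
      · -- N u = M v, u ∉ S, v ∈ S
        exfalso
        have huB : u ∈ B := hu.resolve_left (by rintro rfl; exact huS hxS)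
        have huI2 : u ∈ I := hdag v hvS u huB huv
        exact huS (Relation.ReflTransGen.tail hvS ⟨huB, huI2, huv⟩)
      · have huB : u ∈ B := hu.resolve_left (by rintro rfl; exact huS hxS)
        have hvB : v ∈ B := hv.resolve_left (by rintro rfl; exact hvS hxS)
        exact hNinj huB hvB huv
    · intro v hv
      by_cases hvS : v ∈ S
      · simp only [hvS, if_true]
        exact hMe v (hSsub v hvS)
      · simp only [hvS, if_false]
        exact hNe v (hv.resolve_left (by rintro rfl; exact hvS hxS))
  have hEq : insert x B = B := hB.2 _ hBx (subset_insert _ _)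
  exact hxB (hEq ▸ mem_insert x B)
end
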